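/- If r* ∈ Ω is a constant α-curvature metric (K_i(r*) = s_α(r*)·(r*_i)^α for all i), then for every nonempty proper subset A ⊂ V one has 2πχ(M)·(Σ_{i∈A}(r*_i)^α)/(Σ_{j=1}^N (r*_j)^α) > −Σ_{(e,v)∈Lk(A)} (π − Λ(I_e)) + 2πχ(F_A). -/
import Mathlib


open Real Filter Topology

namespace IDCP

variable {N : ℕ}

/-- The set of edges: 2-element subsets of vertices contained in some face. -/
def edges (Fc : Finset (Finset (Fin N))) : Finset (Finset (Fin N)) :=
  Fc.biUnion fun f => f.powersetCard 2

/-- `Fc` is the face set of a triangulation of a closed connected surface: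
every face has 3 vertices, every edge lies in exactly two faces, and the
1-skeleton is connected. -/
structure IsTriangulation (Fc : Finset (Finset (Fin N))) : Prop where
  card3 : ∀ f ∈ Fc, f.card = 3
  edge2 : ∀ e ∈ edges Fc, (Fc.filter fun f => e ⊆ f).card = 2
  conn : (SimpleGraph.fromRel fun i j => ({i, j} : Finset (Fin N)) ∈ edges Fc).Connected

/-- Euler characteristic χ(M) = N − |E| + |F|. -/
def chi (Fc : Finset (Finset (Fin N))) : ℤ :=
  (N : ℤ) - ((edges Fc).card : ℤ) + (Fc.card : ℤ)

/-- Edge length l_ij = √(r_i² + r_j² + 2 r_i r_j I_{ij}). -/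
noncomputable def len (I : Finset (Fin N) → ℝ) (r : Fin N → ℝ) (i j : Fin N) : ℝ :=
  Real.sqrt (r i ^ 2 + r j ^ 2 + 2 * r i * r j * I {i, j})

/-- The cosine of the inner angle at `i` in triangle `{i,j,k}`. -/
noncomputable def cosAng (I : Finset (Fin N) → ℝ) (r : Fin N → ℝ) (i j k : Fin N) : ℝ :=
  (len I r i j ^ 2 + len I r i k ^ 2 - len I r j k ^ 2) / (2 * len I r i j * len I r i k)

/-- The auxiliary function Λ. -/
noncomputable def Lam (x : ℝ) : ℝ :=
  if x ≤ -1 then π else if x ≤ 1 then Real.arccos x else 0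

/-- Discrete Gaussian curvature K_i = 2π − Σ_{{i,j,k}∈F} θ_i^{jk}.  Every face
containing `i` appears exactly twice (once for each ordering of `j,k`), whence
the factor 1/2. -/
noncomputable def K (Fc : Finset (Finset (Fin N))) (I : Finset (Fin N) → ℝ)
    (r : Fin N → ℝ) (i : Fin N) : ℝ :=
  2 * π - (1 / 2) * ∑ j, ∑ k,
    (if ({i, j, k} : Finset (Fin N)) ∈ Fc then Real.arccos (cosAng I r i j k) else 0)

/-- Extended curvature K̃_i = 2π − Σ θ̃_i^{jk}, using the generalized angles Λ. -/
noncomputable def Kt (Fc : Finset (Finset (Fin N))) (I : Finset (Fin N) → ℝ)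
    (r : Fin N → ℝ) (i : Fin N) : ℝ :=
  2 * π - (1 / 2) * ∑ j, ∑ k,
    (if ({i, j, k} : Finset (Fin N)) ∈ Fc then Lam (cosAng I r i j k) else 0)

/-- The set Ω of inversive distance circle packing metrics. -/
def Omega (Fc : Finset (Finset (Fin N))) (I : Finset (Fin N) → ℝ) : Set (Fin N → ℝ) :=
  {r | (∀ i, 0 < r i) ∧ ∀ i j k : Fin N, ({i, j, k} : Finset (Fin N)) ∈ Fc →
    len I r j k < len I r i j + len I r i k}

/-- s_α = 2πχ(M)/‖r‖_α^α. -/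
noncomputable def sA (Fc : Finset (Finset (Fin N))) (α : ℝ) (r : Fin N → ℝ) : ℝ :=
  2 * π * (chi Fc : ℝ) / ∑ j, r j ^ α

/-- Back from u-coordinates: r_i = e^{u_i}. -/
noncomputable def rOf (u : Fin N → ℝ) : Fin N → ℝ := fun i => Real.exp (u i)

/-- ln Ω, the image of Ω under the coordinate change r ↦ u, u_i = ln r_i. -/
def lnOmega (Fc : Finset (Finset (Fin N))) (I : Finset (Fin N) → ℝ) : Set (Fin N → ℝ) :=
  {u | rOf u ∈ Omega Fc I}

/-- `u` solves the α-flow du_i/dt = s_α r_i^α − K_i on the time set `D`,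
staying in ln Ω. -/
def IsFlowSol (Fc : Finset (Finset (Fin N))) (I : Finset (Fin N) → ℝ) (α : ℝ)
    (D : Set ℝ) (u : ℝ → Fin N → ℝ) : Prop :=
  ∀ t ∈ D, rOf (u t) ∈ Omega Fc I ∧
    ∀ i, HasDerivWithinAt (fun s => u s i)
      (sA Fc α (rOf (u t)) * rOf (u t) i ^ α - K Fc I (rOf (u t)) i) D t

/-- `u` solves the extended α-flow du_i/dt = s_α r_i^α − K̃_i on the time set `D`. -/
def IsExtFlowSol (Fc : Finset (Finset (Fin N))) (I : Finset (Fin N) → ℝ) (α : ℝ)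
    (D : Set ℝ) (u : ℝ → Fin N → ℝ) : Prop :=
  ∀ t ∈ D, ∀ i, HasDerivWithinAt (fun s => u s i)
      (sA Fc α (rOf (u t)) * rOf (u t) i ^ α - Kt Fc I (rOf (u t)) i) D t

/-- Lk(A): pairs (e,v) with both endpoints of e outside A, v ∈ A, and e,v spanning a face. -/
def Lk (Fc : Finset (Finset (Fin N))) (A : Finset (Fin N)) :
    Finset (Finset (Fin N) × Fin N) :=
  ((edges Fc) ×ˢ (Finset.univ : Finset (Fin N))).filter fun p =>
    (∀ x ∈ p.1, x ∉ A) ∧ p.2 ∈ A ∧ insert p.2 p.1 ∈ Fc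

/-- Euler characteristic χ(F_A) of the subcomplex spanned by A. -/
def chiSub (Fc : Finset (Finset (Fin N))) (A : Finset (Fin N)) : ℤ :=
  (A.card : ℤ) - (((edges Fc).filter (fun e => e ⊆ A)).card : ℤ)
    + ((Fc.filter (fun f => f ⊆ A)).card : ℤ)

/-- The lower bound −Σ_{(e,v)∈Lk(A)}(π − Λ(I_e)) + 2πχ(F_A) defining Y_A. -/
noncomputable def Ybound (Fc : Finset (Finset (Fin N))) (I : Finset (Fin N) → ℝ)
    (A : Finset (Fin N)) : ℝ :=
  -(∑ p ∈ Lk Fc A, (π - Lam (I p.1))) + 2 * π * (chiSub Fc A : ℝ)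

/-- x ∈ Y. -/
noncomputable def memY (Fc : Finset (Finset (Fin N))) (I : Finset (Fin N) → ℝ)
    (x : Fin N → ℝ) : Prop :=
  (∑ i, x i) = 2 * π * (chi Fc : ℝ) ∧
    ∀ A : Finset (Fin N), A.Nonempty → A ≠ Finset.univ → Ybound Fc I A < ∑ i ∈ A, x i

/-- x ∈ Ȳ. -/
noncomputable def memYbar (Fc : Finset (Finset (Fin N))) (I : Finset (Fin N) → ℝ)
    (x : Fin N → ℝ) : Prop :=
  (∑ i, x i) = 2 * π * (chi Fc : ℝ) ∧
    ∀ A : Finset (Fin N), A.Nonempty → A ≠ Finset.univ → Ybound Fc I A ≤ ∑ i ∈ A, x i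

/-! ### Auxiliary development for stmt15 -/

section Stmt15Aux

set_option linter.unusedSectionVars false

/-- cosine of the angle between sides `x`,`y`, opposite side `z`. -/
private noncomputable def cang (x y z : ℝ) : ℝ := (x^2 + y^2 - z^2) / (2*x*y)

private lemma cang_comm (x y z : ℝ) : cang x y z = cang y x z := by unfold cang; ring_nf

section TriAbstract

variable {x y z : ℝ} (hx : 0 < x) (hy : 0 < y) (hz : 0 < z)
  (h1 : z < x + y) (h2 : x < y + z) (h3 : y < x + z)

include hx hy hz h1 h2 h3

private lemma neg_one_lt_cang : -1 < cang x y z := by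
  unfold cang
  rw [lt_div_iff₀ (by positivity)]
  nlinarith

private lemma cang_lt_one : cang x y z < 1 := by
  unfold cang
  rw [div_lt_iff₀ (by positivity)]
  nlinarith

private lemma tri_two : Real.arccos (cang x y z) + Real.arccos (cang x z y) < π := by
  have hu1 : -1 < cang x y z := neg_one_lt_cang hx hy hz h1 h2 h3
  have hu2 : cang x y z < 1 := cang_lt_one hx hy hz h1 h2 h3
  have hv1 : -1 < cang x z y := neg_one_lt_cang hx hz hy (by linarith) (by linarith) (by linarith)
  have hv2 : cang x z y < 1 := cang_lt_one hx hz hy (by linarith) (by linarith) (by linarith)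
  have hsum : 0 < cang x y z + cang x z y := by
    unfold cang
    rw [div_add_div _ _ (by positivity) (by positivity), lt_div_iff₀ (by positivity)]
    nlinarith [mul_pos (add_pos hy hz)
      (mul_pos (show (0:ℝ) < x-(y-z) by linarith) (show (0:ℝ) < x+(y-z) by linarith)),
      mul_pos hx (mul_pos hy hz)]
  have h : Real.arccos (cang x y z) < Real.arccos (-(cang x z y)) := by
    apply Real.strictAntiOn_arccos
    · constructor <;> [linarith; linarith]
    · constructor <;> [linarith; linarith]
    · linarith
  rw [Real.arccos_neg] at h
  linarith

private lemma tri_three :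
    Real.arccos (cang x y z) + Real.arccos (cang x z y) + Real.arccos (cang y z x) ≤ π := by
  have hu1 : -1 < cang x y z := neg_one_lt_cang hx hy hz h1 h2 h3
  have hu2 : cang x y z < 1 := cang_lt_one hx hy hz h1 h2 h3
  have hv1 : -1 < cang x z y := neg_one_lt_cang hx hz hy (by linarith) (by linarith) (by linarith)
  have hv2 : cang x z y < 1 := cang_lt_one hx hz hy (by linarith) (by linarith) (by linarith)
  have hw1 : -1 < cang y z x := neg_one_lt_cang hy hz hx (by linarith) (by linarith) (by linarith)
  have hw2 : cang y z x < 1 := cang_lt_one hy hz hx (by linarith) (by linarith) (by linarith)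
  have hAB : Real.arccos (cang x y z) + Real.arccos (cang x z y) < π :=
    tri_two hx hy hz h1 h2 h3
  set u := cang x y z with hu
  set v := cang x z y with hv
  set w := cang y z x with hw
  have expand : u*v + w = ((x+y+z)*(-x+y+z)*(x-y+z)*(x+y-z))/(4*x^2*y*z) := by
    rw [hu, hv, hw]; unfold cang; field_simp; ring
  have hnn : 0 ≤ u*v + w := by
    rw [expand]
    apply div_nonneg _ (by positivity)
    have a1 : (0:ℝ) < x+y+z := by linarith
    have a2 : (0:ℝ) < -x+y+z := by linarith
    have a3 : (0:ℝ) < x-y+z := by linarith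
    have a4 : (0:ℝ) < x+y-z := by linarith
    positivity
  have key : Real.sqrt (1 - u^2) * Real.sqrt (1 - v^2) = u * v + w := by
    rw [← Real.sqrt_mul (by nlinarith)]
    have hid : (1 - u^2) * (1 - v^2) = (u*v + w)^2 := by
      rw [hu, hv, hw]; unfold cang; field_simp; ring
    rw [hid, Real.sqrt_sq hnn]
  have hcos : Real.cos (Real.arccos u + Real.arccos v) = Real.cos (π - Real.arccos w) := by
    rw [Real.cos_add, Real.cos_arccos hu1.le hu2.le, Real.cos_arccos hv1.le hv2.le,
      Real.sin_arccos, Real.sin_arccos, Real.cos_pi_sub, Real.cos_arccos hw1.le hw2.le, key]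
    ring
  have heq : Real.arccos u + Real.arccos v = π - Real.arccos w := by
    apply Real.injOn_cos _ _ hcos
    · exact ⟨add_nonneg (Real.arccos_nonneg u) (Real.arccos_nonneg v), hAB.le⟩
    · constructor
      · linarith [Real.arccos_le_pi w]
      · linarith [Real.arccos_nonneg w]
  linarith

end TriAbstract

variable {N : ℕ}

private lemma mem_edges_of_face {Fc : Finset (Finset (Fin N))} {f e : Finset (Fin N)}
    (hf : f ∈ Fc) (hsub : e ⊆ f) (hcard : e.card = 2) : e ∈ edges Fc :=
  Finset.mem_biUnion.2 ⟨f, hf, Finset.mem_powersetCard.2 ⟨hsub, hcard⟩⟩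

private lemma edges_card {Fc : Finset (Finset (Fin N))} {e : Finset (Fin N)}
    (he : e ∈ edges Fc) : e.card = 2 := by
  obtain ⟨f, _, hmem⟩ := Finset.mem_biUnion.1 he
  exact (Finset.mem_powersetCard.1 hmem).2

private lemma face_perm1 {Fc : Finset (Finset (Fin N))} {i j k : Fin N}
    (h : ({i,j,k} : Finset (Fin N)) ∈ Fc) : ({j,i,k} : Finset (Fin N)) ∈ Fc := by
  rwa [Finset.insert_comm]

private lemma face_perm2 {Fc : Finset (Finset (Fin N))} {i j k : Fin N}
    (h : ({i,j,k} : Finset (Fin N)) ∈ Fc) : ({i,k,j} : Finset (Fin N)) ∈ Fc := by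
  rwa [Finset.pair_comm k j]

private lemma card3_ne {a b c : Fin N}
    (h : ({a,b,c} : Finset (Fin N)).card = 3) : a ≠ b ∧ a ≠ c ∧ b ≠ c := by
  have hle : ∀ (x y : Fin N), (({x,y} : Finset (Fin N))).card ≤ 2 := fun x y => by
    have := Finset.card_insert_le x ({y} : Finset (Fin N)); simpa using this
  refine ⟨?_, ?_, ?_⟩ <;> intro he
  · rw [he] at h
    have e : ({b,b,c} : Finset (Fin N)) = {b,c} := by ext x; simp
    rw [e] at h; have := hle b c; omega
  · rw [he] at h
    have e : ({c,b,c} : Finset (Fin N)) = {c,b} := by ext x; simp; tauto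
    rw [e] at h; have := hle c b; omega
  · rw [he] at h
    have e : ({a,c,c} : Finset (Fin N)) = {a,c} := by ext x; simp
    rw [e] at h; have := hle a c; omega

private lemma face_ne {Fc : Finset (Finset (Fin N))} (hT : IsTriangulation Fc) {i j k : Fin N}
    (hf : ({i,j,k} : Finset (Fin N)) ∈ Fc) : i ≠ j ∧ i ≠ k ∧ j ≠ k :=
  card3_ne (hT.card3 _ hf)

private lemma len_comm (I : Finset (Fin N) → ℝ) (r : Fin N → ℝ) (i j : Fin N) :
    len I r i j = len I r j i := by
  unfold len; rw [Finset.pair_comm]; ring_nf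

private lemma len_pos {I : Finset (Fin N) → ℝ} {r : Fin N → ℝ} {i j : Fin N}
    (hi : 0 < r i) (hj : 0 < r j) (hI : 0 ≤ I {i,j}) : 0 < len I r i j :=
  Real.sqrt_pos.2 (by nlinarith [mul_pos hi hj, mul_nonneg (mul_nonneg (mul_nonneg (by norm_num : (0:ℝ) ≤ 2) hi.le) hj.le) hI])

private lemma len_sq {I : Finset (Fin N) → ℝ} {r : Fin N → ℝ} {i j : Fin N}
    (hi : 0 < r i) (hj : 0 < r j) (hI : 0 ≤ I {i,j}) :
    len I r i j ^ 2 = r i ^ 2 + r j ^ 2 + 2 * r i * r j * I {i,j} :=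
  Real.sq_sqrt (by nlinarith [mul_pos hi hj, mul_nonneg (mul_nonneg (mul_nonneg (by norm_num : (0:ℝ) ≤ 2) hi.le) hj.le) hI])

private lemma cosAng_eq (I : Finset (Fin N) → ℝ) (r : Fin N → ℝ) (i j k : Fin N) :
    cosAng I r i j k = cang (len I r i j) (len I r i k) (len I r j k) := rfl

/-- the angle θ_i^{jk} -/
private noncomputable def th (I : Finset (Fin N) → ℝ) (r : Fin N → ℝ) (i j k : Fin N) : ℝ :=
  Real.arccos (cosAng I r i j k)

private lemma th_sym (I : Finset (Fin N) → ℝ) (r : Fin N → ℝ) (i j k : Fin N) :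
    th I r i j k = th I r i k j := by
  unfold th cosAng
  rw [len_comm I r j k]
  ring_nf

private lemma th_nonneg (I : Finset (Fin N) → ℝ) (r : Fin N → ℝ) (i j k : Fin N) :
    0 ≤ th I r i j k := Real.arccos_nonneg _

section Conc

variable {Fc : Finset (Finset (Fin N))} {I : Finset (Fin N) → ℝ} {r : Fin N → ℝ} {i j k : Fin N}

private lemma tri_facts (hT : IsTriangulation Fc) (hI : ∀ e ∈ edges Fc, 0 ≤ I e)
    (hr : r ∈ Omega Fc I) (hf : ({i,j,k} : Finset (Fin N)) ∈ Fc) :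
    0 < len I r i j ∧ 0 < len I r i k ∧ 0 < len I r j k ∧
    len I r j k < len I r i j + len I r i k ∧
    len I r i j < len I r i k + len I r j k ∧
    len I r i k < len I r i j + len I r j k := by
  obtain ⟨hij, hik, hjk⟩ := face_ne hT hf
  have hIij : 0 ≤ I {i,j} := hI _ (mem_edges_of_face hf
    (by intro x hx; simp at hx ⊢; tauto) (Finset.card_pair hij))
  have hIik : 0 ≤ I {i,k} := hI _ (mem_edges_of_face hf
    (by intro x hx; simp at hx ⊢; tauto) (Finset.card_pair hik))
  have hIjk : 0 ≤ I {j,k} := hI _ (mem_edges_of_face hf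
    (by intro x hx; simp at hx ⊢; tauto) (Finset.card_pair hjk))
  have hl1 : 0 < len I r i j := len_pos (hr.1 i) (hr.1 j) hIij
  have hl2 : 0 < len I r i k := len_pos (hr.1 i) (hr.1 k) hIik
  have hl3 : 0 < len I r j k := len_pos (hr.1 j) (hr.1 k) hIjk
  have t1 : len I r j k < len I r i j + len I r i k := hr.2 i j k hf
  have t2 : len I r i k < len I r j i + len I r j k := hr.2 j i k (face_perm1 hf)
  rw [len_comm I r j i] at t2
  have t3 : len I r i j < len I r k i + len I r k j :=
    hr.2 k i j (face_perm1 (face_perm2 hf))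
  rw [len_comm I r k i, len_comm I r k j] at t3
  exact ⟨hl1, hl2, hl3, t1, t3, t2⟩

private lemma conc_two (hT : IsTriangulation Fc) (hI : ∀ e ∈ edges Fc, 0 ≤ I e)
    (hr : r ∈ Omega Fc I) (hf : ({i,j,k} : Finset (Fin N)) ∈ Fc) :
    th I r i j k + th I r j i k < π := by
  obtain ⟨hl1, hl2, hl3, t1, t2, t3⟩ := tri_facts hT hI hr hf
  have e1 : th I r i j k = Real.arccos (cang (len I r i j) (len I r i k) (len I r j k)) := by
    unfold th; rw [cosAng_eq]
  have e2 : th I r j i k = Real.arccos (cang (len I r i j) (len I r j k) (len I r i k)) := by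
    unfold th; rw [cosAng_eq, len_comm I r j i]
  rw [e1, e2]
  exact tri_two hl1 hl2 hl3 t1 t2 t3

private lemma conc_three (hT : IsTriangulation Fc) (hI : ∀ e ∈ edges Fc, 0 ≤ I e)
    (hr : r ∈ Omega Fc I) (hf : ({i,j,k} : Finset (Fin N)) ∈ Fc) :
    th I r i j k + th I r j i k + th I r k i j ≤ π := by
  obtain ⟨hl1, hl2, hl3, t1, t2, t3⟩ := tri_facts hT hI hr hf
  have e1 : th I r i j k = Real.arccos (cang (len I r i j) (len I r i k) (len I r j k)) := by
    unfold th; rw [cosAng_eq]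
  have e2 : th I r j i k = Real.arccos (cang (len I r i j) (len I r j k) (len I r i k)) := by
    unfold th; rw [cosAng_eq, len_comm I r j i]
  have e3 : th I r k i j = Real.arccos (cang (len I r i k) (len I r j k) (len I r i j)) := by
    unfold th; rw [cosAng_eq, len_comm I r k i, len_comm I r k j]
  rw [e1, e2, e3]
  exact tri_three hl1 hl2 hl3 t1 t2 t3

private lemma conc_one (hT : IsTriangulation Fc) (hI : ∀ e ∈ edges Fc, 0 ≤ I e)
    (hr : r ∈ Omega Fc I) (hf : ({i,j,k} : Finset (Fin N)) ∈ Fc) :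
    th I r i j k < π - Lam (I {j,k}) := by
  obtain ⟨hij, hik, hjk⟩ := face_ne hT hf
  have hIij : 0 ≤ I {i,j} := hI _ (mem_edges_of_face hf
    (by intro x hx; simp at hx ⊢; tauto) (Finset.card_pair hij))
  have hIik : 0 ≤ I {i,k} := hI _ (mem_edges_of_face hf
    (by intro x hx; simp at hx ⊢; tauto) (Finset.card_pair hik))
  have ht0 : 0 ≤ I {j,k} := hI _ (mem_edges_of_face hf
    (by intro x hx; simp at hx ⊢; tauto) (Finset.card_pair hjk))
  obtain ⟨hl1, hl2, hl3, t1, t2, t3⟩ := tri_facts hT hI hr hf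
  have hri := hr.1 i; have hrj := hr.1 j; have hrk := hr.1 k
  have hu1 : -1 < cosAng I r i j k := by
    rw [cosAng_eq]; exact neg_one_lt_cang hl1 hl2 hl3 t1 t2 t3
  have hu2 : cosAng I r i j k < 1 := by
    rw [cosAng_eq]; exact cang_lt_one hl1 hl2 hl3 t1 t2 t3
  unfold th Lam
  rw [if_neg (by intro h; nlinarith [Real.pi_pos] : ¬ I {j,k} ≤ -1)]
  by_cases h1 : I {j,k} ≤ 1
  · rw [if_pos h1]
    have hsq1 := len_sq hri hrj hIij
    have hsq2 := len_sq hri hrk hIik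
    have hsq3 := len_sq hrj hrk ht0
    have hA : (0:ℝ) ≤ r i^2 + r j * r k := by nlinarith
    have hsq : (r i^2 + r j * r k)^2 ≤ (len I r i j * len I r i k)^2 := by
      rw [mul_pow, hsq1, hsq2]
      nlinarith [sq_nonneg (r i * r j - r i * r k),
        mul_nonneg (mul_nonneg (mul_nonneg (by norm_num : (0:ℝ) ≤ 2) hri.le) hrj.le) hIij,
        mul_nonneg (mul_nonneg (mul_nonneg (by norm_num : (0:ℝ) ≤ 2) hri.le) hrk.le) hIik,
        mul_pos hri hrj, mul_pos hri hrk, mul_pos hrj hrk,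
        mul_nonneg (mul_nonneg (mul_nonneg (mul_nonneg (by norm_num : (0:ℝ) ≤ 4) hri.le) hrj.le) hIij) (mul_nonneg (mul_nonneg hri.le hrk.le) hIik),
        mul_nonneg (mul_nonneg (mul_nonneg (mul_nonneg (by norm_num : (0:ℝ) ≤ 2) hri.le) hrj.le) hIij) (sq_nonneg (r i)),
        mul_nonneg (mul_nonneg (mul_nonneg (mul_nonneg (by norm_num : (0:ℝ) ≤ 2) hri.le) hrj.le) hIij) (sq_nonneg (r k)),
        mul_nonneg (mul_nonneg (mul_nonneg (mul_nonneg (by norm_num : (0:ℝ) ≤ 2) hri.le) hrk.le) hIik) (sq_nonneg (r i)),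
        mul_nonneg (mul_nonneg (mul_nonneg (mul_nonneg (by norm_num : (0:ℝ) ≤ 2) hri.le) hrk.le) hIik) (sq_nonneg (r j))]
    have hprod : r i^2 + r j * r k ≤ len I r i j * len I r i k := by
      have h := Real.sqrt_le_sqrt hsq
      rwa [Real.sqrt_sq hA, Real.sqrt_sq (mul_pos hl1 hl2).le] at h
    have hlt : -(I {j,k}) < cosAng I r i j k := by
      unfold cosAng
      rw [lt_div_iff₀ (by positivity)]
      nlinarith [mul_le_mul_of_nonneg_left hprod ht0, mul_pos hri hrj, mul_pos hri hrk,
        mul_pos hrj hrk, mul_nonneg (mul_nonneg hri.le hrj.le) hIij,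
        mul_nonneg (mul_nonneg hri.le hrk.le) hIik]
    have h := Real.strictAntiOn_arccos
      (Set.mem_Icc.2 ⟨by linarith, by linarith⟩)
      (Set.mem_Icc.2 ⟨by linarith, by linarith⟩) hlt
    rwa [Real.arccos_neg] at h
  · rw [if_neg h1, sub_zero]
    rcases lt_or_eq_of_le (Real.arccos_le_pi (cosAng I r i j k)) with h | h
    · exact h
    · exact absurd (Real.arccos_eq_pi.1 h) (by linarith)

end Conc

/-! ### Sums over faces -/

private noncomputable def innerS (I : Finset (Fin N) → ℝ) (r : Fin N → ℝ)
    (A : Finset (Fin N)) (f : Finset (Fin N)) : ℝ :=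
  (1/2) * ∑ i ∈ A, ∑ j, ∑ k, (if ({i,j,k} : Finset (Fin N)) = f then th I r i j k else 0)

private noncomputable def Tb (I : Finset (Fin N) → ℝ) (A f : Finset (Fin N)) : ℝ :=
  (if (f ∩ A).card = 1 then π - Lam (I (f \ A)) else 0)
  + π * (((f ∩ A).card.choose 2 : ℝ) - 2 * (if f ⊆ A then (1:ℝ) else 0))

private lemma innerS_total (Fc : Finset (Finset (Fin N))) (I : Finset (Fin N) → ℝ)
    (r : Fin N → ℝ) (A : Finset (Fin N)) :
    ∑ f ∈ Fc, innerS I r A f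
      = (1/2) * ∑ i ∈ A, ∑ j, ∑ k,
          (if ({i,j,k} : Finset (Fin N)) ∈ Fc then Real.arccos (cosAng I r i j k) else 0) := by
  unfold innerS
  rw [← Finset.mul_sum]
  congr 1
  rw [Finset.sum_comm]
  refine Finset.sum_congr rfl fun i _ => ?_
  rw [Finset.sum_comm]
  refine Finset.sum_congr rfl fun j _ => ?_
  rw [Finset.sum_comm]
  refine Finset.sum_congr rfl fun k _ => ?_
  rw [Finset.sum_ite_eq]
  rfl

private lemma sumK (Fc : Finset (Finset (Fin N))) (I : Finset (Fin N) → ℝ)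
    (r : Fin N → ℝ) (A : Finset (Fin N)) :
    ∑ i ∈ A, K Fc I r i = 2*π*(A.card : ℝ) - ∑ f ∈ Fc, innerS I r A f := by
  rw [innerS_total]
  unfold K
  rw [Finset.sum_sub_distrib, Finset.sum_const, nsmul_eq_mul, Finset.mul_sum]
  ring

private lemma ev2 (q s : Fin N) (C : ℝ) :
    (∑ j : Fin N, ∑ k : Fin N, if j = q ∧ k = s then C else 0) = C := by
  have h : ∀ j : Fin N, (∑ k : Fin N, if j = q ∧ k = s then C else 0)
      = if j = q then C else 0 := by
    intro j
    by_cases hj : j = q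
    · subst hj; simp [Finset.sum_ite_eq']
    · simp [hj]
  rw [Finset.sum_congr rfl fun j _ => h j]
  simp [Finset.sum_ite_eq']

private lemma ev3 (A : Finset (Fin N)) (p q s : Fin N) (C : ℝ) :
    (∑ i ∈ A, ∑ j : Fin N, ∑ k : Fin N, if i = p ∧ j = q ∧ k = s then C else 0)
      = if p ∈ A then C else 0 := by
  have h : ∀ i : Fin N, (∑ j : Fin N, ∑ k : Fin N, if i = p ∧ j = q ∧ k = s then C else 0)
      = if i = p then C else 0 := by
    intro i
    by_cases hip : i = p
    · subst hip; simp only [true_and]; rw [ev2]; simp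
    · simp [hip]
  rw [Finset.sum_congr rfl fun i _ => h i, Finset.sum_ite_eq' A p fun _ => C]

set_option maxHeartbeats 1600000 in
private lemma innerS_eq (I : Finset (Fin N) → ℝ) (r : Fin N → ℝ) (A : Finset (Fin N))
    {a b c : Fin N} (hab : a ≠ b) (hac : a ≠ c) (hbc : b ≠ c) :
    innerS I r A {a,b,c}
      = (if a ∈ A then th I r a b c else 0) + (if b ∈ A then th I r b a c else 0)
        + (if c ∈ A then th I r c a b else 0) := by
  have hba := hab.symm; have hca := hac.symm; have hcb := hbc.symm
  have key : ∀ i j k : Fin N,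
      (if ({i,j,k} : Finset (Fin N)) = {a,b,c} then th I r i j k else 0)
        = (if i = a ∧ j = b ∧ k = c then th I r a b c else 0)
        + ((if i = a ∧ j = c ∧ k = b then th I r a c b else 0)
        + ((if i = b ∧ j = a ∧ k = c then th I r b a c else 0)
        + ((if i = b ∧ j = c ∧ k = a then th I r b c a else 0)
        + ((if i = c ∧ j = a ∧ k = b then th I r c a b else 0)
        + (if i = c ∧ j = b ∧ k = a then th I r c b a else 0))))) := by
    intro i j k
    by_cases h : ({i,j,k} : Finset (Fin N)) = {a,b,c}
    · have hmem : ∀ x : Fin N, x ∈ ({i,j,k} : Finset (Fin N)) → x = a ∨ x = b ∨ x = c := by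
        intro x hx; rw [h] at hx; simpa using hx
      have hi := hmem i (by simp)
      have hj := hmem j (by simp)
      have hk := hmem k (by simp)
      have hcard : ({i,j,k} : Finset (Fin N)).card = 3 := by
        rw [h, Finset.card_insert_of_notMem (by simp [hab, hac]), Finset.card_pair hbc]
      obtain ⟨hij, hik, hjk⟩ := card3_ne hcard
      rw [if_pos h]
      clear hmem hcard h
      rcases hi with rfl|rfl|rfl <;> rcases hj with rfl|rfl|rfl <;> rcases hk with rfl|rfl|rfl <;>
        simp_all
    · have n1 : ¬(i = a ∧ j = b ∧ k = c) := fun hc => h (by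
        obtain ⟨rfl,rfl,rfl⟩ := hc
        ext x; simp only [Finset.mem_insert, Finset.mem_singleton] <;> tauto)
      have n2 : ¬(i = a ∧ j = c ∧ k = b) := fun hc => h (by
        obtain ⟨rfl,rfl,rfl⟩ := hc
        ext x; simp only [Finset.mem_insert, Finset.mem_singleton] <;> tauto)
      have n3 : ¬(i = b ∧ j = a ∧ k = c) := fun hc => h (by
        obtain ⟨rfl,rfl,rfl⟩ := hc
        ext x; simp only [Finset.mem_insert, Finset.mem_singleton] <;> tauto)
      have n4 : ¬(i = b ∧ j = c ∧ k = a) := fun hc => h (by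
        obtain ⟨rfl,rfl,rfl⟩ := hc
        ext x; simp only [Finset.mem_insert, Finset.mem_singleton] <;> tauto)
      have n5 : ¬(i = c ∧ j = a ∧ k = b) := fun hc => h (by
        obtain ⟨rfl,rfl,rfl⟩ := hc
        ext x; simp only [Finset.mem_insert, Finset.mem_singleton] <;> tauto)
      have n6 : ¬(i = c ∧ j = b ∧ k = a) := fun hc => h (by
        obtain ⟨rfl,rfl,rfl⟩ := hc
        ext x; simp only [Finset.mem_insert, Finset.mem_singleton] <;> tauto)
      rw [if_neg h, if_neg n1, if_neg n2, if_neg n3, if_neg n4, if_neg n5, if_neg n6]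
      ring
  unfold innerS
  rw [Finset.sum_congr rfl fun i _ => Finset.sum_congr rfl fun j _ =>
    Finset.sum_congr rfl fun k _ => key i j k]
  simp only [Finset.sum_add_distrib]
  rw [ev3 A a b c (th I r a b c), ev3 A a c b (th I r a c b), ev3 A b a c (th I r b a c),
    ev3 A b c a (th I r b c a), ev3 A c a b (th I r c a b), ev3 A c b a (th I r c b a)]
  rw [show th I r a c b = th I r a b c from (th_sym I r a b c).symm,
    show th I r b c a = th I r b a c from (th_sym I r b a c).symm,
    show th I r c b a = th I r c a b from (th_sym I r c a b).symm]
  ring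

private lemma Lk_sum (Fc : Finset (Finset (Fin N))) (hT : IsTriangulation Fc)
    (I : Finset (Fin N) → ℝ) (A : Finset (Fin N)) :
    ∑ p ∈ Lk Fc A, (π - Lam (I p.1))
      = ∑ f ∈ Fc, (if (f ∩ A).card = 1 then π - Lam (I (f \ A)) else 0) := by
  rw [← Finset.sum_filter]
  have hmem : ∀ p ∈ Lk Fc A,
      p.1 ∈ edges Fc ∧ (∀ x ∈ p.1, x ∉ A) ∧ p.2 ∈ A ∧ insert p.2 p.1 ∈ Fc := by
    intro p hp
    have h := Finset.mem_filter.1 hp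
    exact ⟨(Finset.mem_product.1 h.1).1, h.2⟩
  have hkey : ∀ p ∈ Lk Fc A,
      (insert p.2 p.1) ∩ A = {p.2} ∧ (insert p.2 p.1) \ A = p.1 := by
    intro p hp
    obtain ⟨he, hout, hv, hfm⟩ := hmem p hp
    constructor
    · ext x
      simp only [Finset.mem_inter, Finset.mem_insert, Finset.mem_singleton]
      constructor
      · rintro ⟨hx1 | hx1, hx2⟩
        · exact hx1
        · exact absurd hx2 (hout x hx1)
      · rintro rfl; exact ⟨Or.inl rfl, hv⟩
    · ext x
      simp only [Finset.mem_sdiff, Finset.mem_insert]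
      constructor
      · rintro ⟨hx1 | hx1, hx2⟩
        · subst hx1; exact absurd hv hx2
        · exact hx1
      · intro hx; exact ⟨Or.inr hx, hout x hx⟩
  apply Finset.sum_bij (fun p _ => insert p.2 p.1)
  · intro p hp
    obtain ⟨he, hout, hv, hfm⟩ := hmem p hp
    obtain ⟨h1, h2⟩ := hkey p hp
    refine Finset.mem_filter.2 ⟨hfm, ?_⟩
    rw [h1]; simp
  · intro p1 hp1 p2 hp2 hpe
    obtain ⟨h11, h12⟩ := hkey p1 hp1
    obtain ⟨h21, h22⟩ := hkey p2 hp2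
    have hv : ({p1.2} : Finset (Fin N)) = {p2.2} := by rw [← h11, ← h21, hpe]
    have he : p1.1 = p2.1 := by rw [← h12, ← h22, hpe]
    exact Prod.ext he (Finset.singleton_injective hv)
  · intro f hf
    obtain ⟨hfFc, hc1⟩ := Finset.mem_filter.1 hf
    obtain ⟨v, hv⟩ := Finset.card_eq_one.1 hc1
    have hvf : v ∈ f ∧ v ∈ A := by
      have h := hv ▸ Finset.mem_singleton_self v
      exact ⟨(Finset.mem_inter.1 h).1, (Finset.mem_inter.1 h).2⟩
    have hins : insert v (f \ A) = f := by
      ext x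
      simp only [Finset.mem_insert, Finset.mem_sdiff]
      constructor
      · rintro (rfl | ⟨hx, _⟩)
        · exact hvf.1
        · exact hx
      · intro hx
        by_cases hxA : x ∈ A
        · left
          have h : x ∈ f ∩ A := Finset.mem_inter.2 ⟨hx, hxA⟩
          rw [hv] at h
          exact Finset.mem_singleton.1 h
        · right; exact ⟨hx, hxA⟩
    have hcard2 : (f \ A).card = 2 := by
      have h3 := hT.card3 f hfFc
      have h4 := Finset.card_sdiff_add_card_inter f A
      omega
    refine ⟨(f \ A, v), ?_, hins⟩
    refine Finset.mem_filter.2 ⟨Finset.mem_product.2 ⟨?_, Finset.mem_univ v⟩, ?_, hvf.2, ?_⟩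
    · exact mem_edges_of_face hfFc Finset.sdiff_subset hcard2
    · intro x hx; exact (Finset.mem_sdiff.1 hx).2
    · show insert v (f \ A) ∈ Fc
      rw [hins]; exact hfFc
  · intro p hp
    obtain ⟨h1, h2⟩ := hkey p hp
    rw [h2]

private lemma count_EA (Fc : Finset (Finset (Fin N))) (hT : IsTriangulation Fc)
    (A : Finset (Fin N)) :
    2 * ((edges Fc).filter (fun e => e ⊆ A)).card
      = ∑ f ∈ Fc, ((f ∩ A).card.choose 2) := by
  have step1 : ∀ e ∈ (edges Fc).filter (fun e => e ⊆ A),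
      (Fc.filter fun f => e ⊆ f).card = 2 :=
    fun e he => hT.edge2 e (Finset.mem_filter.1 he).1
  calc 2 * ((edges Fc).filter (fun e => e ⊆ A)).card
      = ∑ e ∈ (edges Fc).filter (fun e => e ⊆ A), (Fc.filter fun f => e ⊆ f).card := by
        rw [Finset.sum_congr rfl step1, Finset.sum_const, smul_eq_mul, mul_comm]
    _ = ∑ e ∈ (edges Fc).filter (fun e => e ⊆ A), ∑ f ∈ Fc, (if e ⊆ f then 1 else 0) := by
        refine Finset.sum_congr rfl fun e _ => ?_
        rw [Finset.card_filter]
    _ = ∑ f ∈ Fc, ∑ e ∈ (edges Fc).filter (fun e => e ⊆ A), (if e ⊆ f then 1 else 0) :=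
        Finset.sum_comm
    _ = ∑ f ∈ Fc, ((f ∩ A).card.choose 2) := by
        refine Finset.sum_congr rfl fun f hf => ?_
        rw [← Finset.card_filter, Finset.filter_filter]
        have hset : (edges Fc).filter (fun e => e ⊆ A ∧ e ⊆ f) = (f ∩ A).powersetCard 2 := by
          ext e
          simp only [Finset.mem_filter, Finset.mem_powersetCard, Finset.subset_inter_iff]
          constructor
          · rintro ⟨he, h1, h2⟩; exact ⟨⟨h2, h1⟩, edges_card he⟩
          · rintro ⟨⟨h2, h1⟩, hc⟩
            exact ⟨mem_edges_of_face hf h2 hc, h1, h2⟩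
        rw [hset, Finset.card_powersetCard]

private lemma cross_walk {V : Type*} {G : SimpleGraph V} {A : Finset V} :
    ∀ {a b : V}, G.Walk a b → a ∈ A → b ∉ A → ∃ u v, u ∈ A ∧ v ∉ A ∧ G.Adj u v := by
  intro a b w
  induction w with
  | nil => intro ha hb; exact absurd ha hb
  | @cons u v w' h p ih =>
      intro ha hb
      by_cases hv : v ∈ A
      · exact ih hv hb
      · exact ⟨u, v, ha, hv, h⟩

private lemma exists_boundary {Fc : Finset (Finset (Fin N))} (hT : IsTriangulation Fc)
    {A : Finset (Fin N)} (hA : A.Nonempty) (hAne : A ≠ Finset.univ) :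
    ∃ f ∈ Fc, (f ∩ A).Nonempty ∧ ¬ f ⊆ A := by
  obtain ⟨a, ha⟩ := hA
  obtain ⟨b, hb⟩ : ∃ b, b ∉ A := by
    by_contra hcon; push_neg at hcon
    exact hAne (Finset.eq_univ_iff_forall.2 hcon)
  obtain ⟨w⟩ := hT.conn.preconnected a b
  obtain ⟨u, v, huA, hvA, hadj⟩ := cross_walk w ha hb
  rw [SimpleGraph.fromRel_adj] at hadj
  obtain ⟨hne, hrel⟩ := hadj
  have hedge : ({u,v} : Finset (Fin N)) ∈ edges Fc := by
    rcases hrel with h | h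
    · exact h
    · rwa [Finset.pair_comm]
  obtain ⟨f, hfFc, hmemf⟩ := Finset.mem_biUnion.1 hedge
  have hsub : ({u,v} : Finset (Fin N)) ⊆ f := (Finset.mem_powersetCard.1 hmemf).1
  exact ⟨f, hfFc, ⟨u, Finset.mem_inter.2 ⟨hsub (by simp), huA⟩⟩,
    fun hsubA => hvA (hsubA (hsub (by simp)))⟩

private lemma face_bound {Fc : Finset (Finset (Fin N))} (hT : IsTriangulation Fc)
    {I : Finset (Fin N) → ℝ} (hI : ∀ e ∈ edges Fc, 0 ≤ I e) {r : Fin N → ℝ}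
    (hr : r ∈ Omega Fc I) (A : Finset (Fin N)) {f : Finset (Fin N)} (hf : f ∈ Fc) :
    innerS I r A f ≤ Tb I A f ∧
      ((f ∩ A).Nonempty → ¬ f ⊆ A → innerS I r A f < Tb I A f) := by
  obtain ⟨a, b, c, hab, hac, hbc, rfl⟩ := Finset.card_eq_three.1 (hT.card3 f hf)
  rw [innerS_eq I r A hab hac hbc]
  have hn1 := th_nonneg I r a b c
  have hn2 := th_nonneg I r b a c
  have hn3 := th_nonneg I r c a b
  have h2ab : th I r a b c + th I r b a c < π := conc_two hT hI hr hf
  have h2ac : th I r a b c + th I r c a b < π := by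
    have h := conc_two hT hI hr (face_perm2 hf)
    rwa [← th_sym I r a b c] at h
  have h2bc : th I r b a c + th I r c a b < π := by
    have h := conc_two hT hI hr (face_perm2 (face_perm1 hf))
    rwa [← th_sym I r b a c, ← th_sym I r c a b] at h
  have h3s : th I r a b c + th I r b a c + th I r c a b ≤ π := conc_three hT hI hr hf
  have hone_a : th I r a b c < π - Lam (I {b,c}) := conc_one hT hI hr hf
  have hone_b : th I r b a c < π - Lam (I {a,c}) := conc_one hT hI hr (face_perm1 hf)
  have hone_c : th I r c a b < π - Lam (I {a,b}) :=
    conc_one hT hI hr (face_perm1 (face_perm2 hf))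
  by_cases ha : a ∈ A <;> by_cases hb : b ∈ A <;> by_cases hc : c ∈ A
  -- case 1 : a, b, c ∈ A
  · have hsub : ({a,b,c} : Finset (Fin N)) ⊆ A := by
      intro x hx
      simp only [Finset.mem_insert, Finset.mem_singleton] at hx
      rcases hx with rfl|rfl|rfl <;> assumption
    have hint : ({a,b,c} : Finset (Fin N)) ∩ A = {a,b,c} := Finset.inter_eq_left.2 hsub
    have hcard : ({a,b,c} : Finset (Fin N)).card = 3 := by
      rw [Finset.card_insert_of_notMem (by simp [hab, hac]), Finset.card_pair hbc]
    have hTb : Tb I A {a,b,c} = π := by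
      unfold Tb
      rw [hint, hcard, if_neg (by norm_num), if_pos hsub]
      norm_num [Nat.choose]
    rw [hTb, if_pos ha, if_pos hb, if_pos hc]
    exact ⟨h3s, fun _ hns => absurd hsub hns⟩
  -- case 2 : a, b ∈ A, c ∉ A
  · have hint : ({a,b,c} : Finset (Fin N)) ∩ A = {a,b} := by
      ext x
      simp only [Finset.mem_inter, Finset.mem_insert, Finset.mem_singleton]
      constructor
      · rintro ⟨rfl|rfl|rfl, hx2⟩
        · exact Or.inl rfl
        · exact Or.inr rfl
        · exact absurd hx2 hc
      · rintro (rfl|rfl)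
        · exact ⟨Or.inl rfl, ha⟩
        · exact ⟨Or.inr (Or.inl rfl), hb⟩
    have hnsub : ¬ ({a,b,c} : Finset (Fin N)) ⊆ A := fun hs => hc (hs (by simp))
    have hTb : Tb I A {a,b,c} = π := by
      unfold Tb
      rw [hint, Finset.card_pair hab, if_neg (by norm_num), if_neg hnsub]
      norm_num [Nat.choose]
    rw [hTb, if_pos ha, if_pos hb, if_neg hc]
    have hlt : th I r a b c + th I r b a c + 0 < π := by linarith
    exact ⟨hlt.le, fun _ _ => hlt⟩
  -- case 3 : a, c ∈ A, b ∉ A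
  · have hint : ({a,b,c} : Finset (Fin N)) ∩ A = {a,c} := by
      ext x
      simp only [Finset.mem_inter, Finset.mem_insert, Finset.mem_singleton]
      constructor
      · rintro ⟨rfl|rfl|rfl, hx2⟩
        · exact Or.inl rfl
        · exact absurd hx2 hb
        · exact Or.inr rfl
      · rintro (rfl|rfl)
        · exact ⟨Or.inl rfl, ha⟩
        · exact ⟨Or.inr (Or.inr rfl), hc⟩
    have hnsub : ¬ ({a,b,c} : Finset (Fin N)) ⊆ A := fun hs => hb (hs (by simp))
    have hTb : Tb I A {a,b,c} = π := by
      unfold Tb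
      rw [hint, Finset.card_pair hac, if_neg (by norm_num), if_neg hnsub]
      norm_num [Nat.choose]
    rw [hTb, if_pos ha, if_neg hb, if_pos hc]
    have hlt : th I r a b c + 0 + th I r c a b < π := by linarith
    exact ⟨hlt.le, fun _ _ => hlt⟩
  -- case 4 : a ∈ A, b, c ∉ A
  · have hint : ({a,b,c} : Finset (Fin N)) ∩ A = {a} := by
      ext x
      simp only [Finset.mem_inter, Finset.mem_insert, Finset.mem_singleton]
      constructor
      · rintro ⟨rfl|rfl|rfl, hx2⟩
        · rfl
        · exact absurd hx2 hb
        · exact absurd hx2 hc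
      · rintro rfl
        exact ⟨Or.inl rfl, ha⟩
    have hdiff : ({a,b,c} : Finset (Fin N)) \ A = {b,c} := by
      ext x
      simp only [Finset.mem_sdiff, Finset.mem_insert, Finset.mem_singleton]
      constructor
      · rintro ⟨rfl|rfl|rfl, hx2⟩
        · exact absurd ha hx2
        · exact Or.inl rfl
        · exact Or.inr rfl
      · rintro (rfl|rfl)
        · exact ⟨Or.inr (Or.inl rfl), hb⟩
        · exact ⟨Or.inr (Or.inr rfl), hc⟩
    have hnsub : ¬ ({a,b,c} : Finset (Fin N)) ⊆ A := fun hs => hb (hs (by simp))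
    have hTb : Tb I A {a,b,c} = π - Lam (I {b,c}) := by
      unfold Tb
      rw [hint, hdiff, Finset.card_singleton, if_pos rfl, if_neg hnsub]
      norm_num [Nat.choose]
    rw [hTb, if_pos ha, if_neg hb, if_neg hc]
    have hlt : th I r a b c + 0 + 0 < π - Lam (I {b,c}) := by linarith
    exact ⟨hlt.le, fun _ _ => hlt⟩
  -- case 5 : b, c ∈ A, a ∉ A
  · have hint : ({a,b,c} : Finset (Fin N)) ∩ A = {b,c} := by
      ext x
      simp only [Finset.mem_inter, Finset.mem_insert, Finset.mem_singleton]
      constructor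
      · rintro ⟨rfl|rfl|rfl, hx2⟩
        · exact absurd hx2 ha
        · exact Or.inl rfl
        · exact Or.inr rfl
      · rintro (rfl|rfl)
        · exact ⟨Or.inr (Or.inl rfl), hb⟩
        · exact ⟨Or.inr (Or.inr rfl), hc⟩
    have hnsub : ¬ ({a,b,c} : Finset (Fin N)) ⊆ A := fun hs => ha (hs (by simp))
    have hTb : Tb I A {a,b,c} = π := by
      unfold Tb
      rw [hint, Finset.card_pair hbc, if_neg (by norm_num), if_neg hnsub]
      norm_num [Nat.choose]
    rw [hTb, if_neg ha, if_pos hb, if_pos hc]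
    have hlt : 0 + th I r b a c + th I r c a b < π := by linarith
    exact ⟨hlt.le, fun _ _ => hlt⟩
  -- case 6 : b ∈ A, a, c ∉ A
  · have hint : ({a,b,c} : Finset (Fin N)) ∩ A = {b} := by
      ext x
      simp only [Finset.mem_inter, Finset.mem_insert, Finset.mem_singleton]
      constructor
      · rintro ⟨rfl|rfl|rfl, hx2⟩
        · exact absurd hx2 ha
        · rfl
        · exact absurd hx2 hc
      · rintro rfl
        exact ⟨Or.inr (Or.inl rfl), hb⟩
    have hdiff : ({a,b,c} : Finset (Fin N)) \ A = {a,c} := by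
      ext x
      simp only [Finset.mem_sdiff, Finset.mem_insert, Finset.mem_singleton]
      constructor
      · rintro ⟨rfl|rfl|rfl, hx2⟩
        · exact Or.inl rfl
        · exact absurd hb hx2
        · exact Or.inr rfl
      · rintro (rfl|rfl)
        · exact ⟨Or.inl rfl, ha⟩
        · exact ⟨Or.inr (Or.inr rfl), hc⟩
    have hnsub : ¬ ({a,b,c} : Finset (Fin N)) ⊆ A := fun hs => ha (hs (by simp))
    have hTb : Tb I A {a,b,c} = π - Lam (I {a,c}) := by
      unfold Tb
      rw [hint, hdiff, Finset.card_singleton, if_pos rfl, if_neg hnsub]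
      norm_num [Nat.choose]
    rw [hTb, if_neg ha, if_pos hb, if_neg hc]
    have hlt : 0 + th I r b a c + 0 < π - Lam (I {a,c}) := by linarith
    exact ⟨hlt.le, fun _ _ => hlt⟩
  -- case 7 : c ∈ A, a, b ∉ A
  · have hint : ({a,b,c} : Finset (Fin N)) ∩ A = {c} := by
      ext x
      simp only [Finset.mem_inter, Finset.mem_insert, Finset.mem_singleton]
      constructor
      · rintro ⟨rfl|rfl|rfl, hx2⟩
        · exact absurd hx2 ha
        · exact absurd hx2 hb
        · rfl
      · rintro rfl
        exact ⟨Or.inr (Or.inr rfl), hc⟩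
    have hdiff : ({a,b,c} : Finset (Fin N)) \ A = {a,b} := by
      ext x
      simp only [Finset.mem_sdiff, Finset.mem_insert, Finset.mem_singleton]
      constructor
      · rintro ⟨rfl|rfl|rfl, hx2⟩
        · exact Or.inl rfl
        · exact Or.inr rfl
        · exact absurd hc hx2
      · rintro (rfl|rfl)
        · exact ⟨Or.inl rfl, ha⟩
        · exact ⟨Or.inr (Or.inl rfl), hb⟩
    have hnsub : ¬ ({a,b,c} : Finset (Fin N)) ⊆ A := fun hs => ha (hs (by simp))
    have hTb : Tb I A {a,b,c} = π - Lam (I {a,b}) := by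
      unfold Tb
      rw [hint, hdiff, Finset.card_singleton, if_pos rfl, if_neg hnsub]
      norm_num [Nat.choose]
    rw [hTb, if_neg ha, if_neg hb, if_pos hc]
    have hlt : 0 + 0 + th I r c a b < π - Lam (I {a,b}) := by linarith
    exact ⟨hlt.le, fun _ _ => hlt⟩
  -- case 8 : a, b, c ∉ A
  · have hint : ({a,b,c} : Finset (Fin N)) ∩ A = ∅ := by
      ext x
      simp only [Finset.mem_inter, Finset.mem_insert, Finset.mem_singleton,
        Finset.notMem_empty, iff_false, not_and]
      rintro (rfl|rfl|rfl) <;> assumption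
    have hnsub : ¬ ({a,b,c} : Finset (Fin N)) ⊆ A := fun hs => ha (hs (by simp))
    have hTb : Tb I A {a,b,c} = 0 := by
      unfold Tb
      rw [hint, Finset.card_empty, if_neg (by norm_num), if_neg hnsub]
      norm_num [Nat.choose]
    rw [hTb, if_neg ha, if_neg hb, if_neg hc]
    refine ⟨by norm_num, fun hne _ => absurd hne ?_⟩
    rw [hint]
    exact Finset.not_nonempty_empty

private lemma Tb_sum (Fc : Finset (Finset (Fin N))) (hT : IsTriangulation Fc)
    (I : Finset (Fin N) → ℝ) (A : Finset (Fin N)) :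
    ∑ f ∈ Fc, Tb I A f
      = (∑ p ∈ Lk Fc A, (π - Lam (I p.1)))
        + π * (2 * (((edges Fc).filter (fun e => e ⊆ A)).card : ℝ))
        - 2 * π * ((Fc.filter (fun f => f ⊆ A)).card : ℝ) := by
  have e2 : ∑ f ∈ Fc, (((f ∩ A).card.choose 2 : ℕ) : ℝ)
      = 2 * (((edges Fc).filter (fun e => e ⊆ A)).card : ℝ) := by
    rw [← Nat.cast_sum, ← count_EA Fc hT A]
    push_cast
    ring
  have e3 : ∑ f ∈ Fc, (if f ⊆ A then (1:ℝ) else 0)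
      = ((Fc.filter (fun f => f ⊆ A)).card : ℝ) := by
    rw [Finset.sum_boole]
  have e4 : ∑ f ∈ Fc, (π * ((((f ∩ A).card.choose 2 : ℕ) : ℝ) - 2 * (if f ⊆ A then (1:ℝ) else 0)))
      = π * (2 * (((edges Fc).filter (fun e => e ⊆ A)).card : ℝ))
        - 2 * π * ((Fc.filter (fun f => f ⊆ A)).card : ℝ) := by
    rw [← Finset.mul_sum, Finset.sum_sub_distrib, ← Finset.mul_sum, e2, e3]
    ring
  unfold Tb
  rw [Finset.sum_add_distrib, ← Lk_sum Fc hT I A, e4]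
  ring

end Stmt15Aux

/-- if r* ∈ Ω has constant α-curvature then for every nonempty
proper A ⊂ V,
2πχ(M)·(Σ_{i∈A}(r*_i)^α)/(Σ_j (r*_j)^α) > −Σ_{(e,v)∈Lk(A)}(π − Λ(I_e)) + 2πχ(F_A). -/
theorem stmt15 {N : ℕ} (Fc : Finset (Finset (Fin N))) (hT : IsTriangulation Fc)
    (I : Finset (Fin N) → ℝ) (hI : ∀ e ∈ edges Fc, 0 ≤ I e) (α : ℝ)
    (rstar : Fin N → ℝ) (hrs : rstar ∈ Omega Fc I)
    (hconst : ∀ i : Fin N, K Fc I rstar i = sA Fc α rstar * rstar i ^ α) :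
    ∀ A : Finset (Fin N), A.Nonempty → A ≠ Finset.univ →
      Ybound Fc I A <
        2 * π * (chi Fc : ℝ) * (∑ i ∈ A, rstar i ^ α) / (∑ j, rstar j ^ α) := by
  intro A hA hAne
  have hKsum : ∑ i ∈ A, K Fc I rstar i
      = 2 * π * (chi Fc : ℝ) * (∑ i ∈ A, rstar i ^ α) / (∑ j, rstar j ^ α) := by
    rw [Finset.sum_congr rfl fun i _ => hconst i, ← Finset.mul_sum]
    unfold sA
    rw [div_mul_eq_mul_div]
  rw [← hKsum, sumK Fc I rstar A]
  obtain ⟨f0, hf0, hne0, hns0⟩ := exists_boundary hT hA hAne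
  have hlt : ∑ f ∈ Fc, innerS I rstar A f < ∑ f ∈ Fc, Tb I A f :=
    Finset.sum_lt_sum (fun f hf => (face_bound hT hI hrs A hf).1)
      ⟨f0, hf0, (face_bound hT hI hrs A hf0).2 hne0 hns0⟩
  have hYb : Ybound Fc I A = 2 * π * (A.card : ℝ) - ∑ f ∈ Fc, Tb I A f := by
    rw [Tb_sum Fc hT I A]
    unfold Ybound chiSub
    push_cast
    ring
  rw [hYb]
  linarith

end IDCP
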